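/- arXiv:quant-ph/0106160 — 3 statements merged into one kernel-verified Lean document; each statement's English description precedes it below -/
import Mathlib

section
/- Let f : {0,1}^n → ℝ with ||f||_2 ≤ 1, where ||f||_2² = (1/2^n) Σ_x f(x)². Then the entropy of the squared Fourier coefficients satisfies H(f̂²) = -Σ_z f̂_z² log₂(f̂_z²) ≤ 2 log₂(1 + Σ_z |f̂_z|). -/
open Finset

/-- Fourier coefficient of `f : {0,1}^n → ℝ` at `z`. -/
noncomputable def fhat {n : ℕ} (f : (Fin n → Bool) → ℝ) (z : Fin n → Bool) : ℝ :=
  (1 / 2 ^ n) * ∑ x : Fin n → Bool, f x * (-1 : ℝ) ^ (∑ i : Fin n, if x i && z i then 1 else 0 : ℕ)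

namespace EFB

variable {n : ℕ}

noncomputable def E (x z : Fin n → Bool) : ℝ := ∏ i, (if x i && z i then (-1:ℝ) else 1)

lemma pow_eq_E (x z : Fin n → Bool) :
    (-1 : ℝ) ^ (∑ i : Fin n, if x i && z i then 1 else 0 : ℕ) = E x z := by
  rw [E, ← Finset.prod_pow_eq_pow_sum]
  refine Finset.prod_congr rfl fun i _ => ?_
  by_cases h : x i && z i <;> simp [h]

lemma E_mul (x y z : Fin n → Bool) : E x z * E y z = E (fun i => xor (x i) (y i)) z := by
  rw [E, E, E, ← Finset.prod_mul_distrib]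
  refine Finset.prod_congr rfl fun i _ => ?_
  cases hx : x i <;> cases hy : y i <;> cases hz : z i <;> simp

lemma sum_E (w : Fin n → Bool) :
    ∑ z : Fin n → Bool, E w z = if w = fun _ => false then (2:ℝ)^n else 0 := by
  have h : ∑ z : Fin n → Bool, E w z
      = ∏ i : Fin n, ∑ b : Bool, (if w i && b then (-1:ℝ) else 1) := by
    rw [Finset.prod_univ_sum, Fintype.piFinset_univ]
    rfl
  rw [h]
  by_cases hw : w = fun _ => false
  · subst hw
    simp
  · simp only [hw, if_false]
    obtain ⟨i, hi⟩ : ∃ i, w i = true := by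
      by_contra hc
      push_neg at hc
      exact hw (funext fun i => by simpa using hc i)
    apply Finset.prod_eq_zero (Finset.mem_univ i)
    simp [hi]

lemma key (x y : Fin n → Bool) :
    ∑ z : Fin n → Bool, E x z * E y z = if x = y then (2:ℝ)^n else 0 := by
  have h : ∀ z, E x z * E y z = E (fun i => xor (x i) (y i)) z := fun z => E_mul x y z
  simp_rw [h, sum_E]
  have hiff : ((fun i => xor (x i) (y i)) = fun _ => false) ↔ x = y := by
    constructor
    · intro h'
      funext i
      have h2 := congrFun h' i
      revert h2
      cases x i <;> cases y i <;> simp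
    · intro h'
      subst h'
      funext i
      simp
  rw [if_congr hiff rfl rfl]

lemma parseval (f : (Fin n → Bool) → ℝ) :
    ∑ z : Fin n → Bool, (fhat f z)^2 = (1 / 2 ^ n) * ∑ x : Fin n → Bool, (f x)^2 := by
  have hfhat : ∀ z, fhat f z = (1 / 2 ^ n : ℝ) * ∑ x, f x * E x z := by
    intro z
    rw [fhat]
    congr 1
    exact Finset.sum_congr rfl fun x _ => by rw [pow_eq_E]
  have h2n : ((2:ℝ)^n) ≠ 0 := by positivity
  calc ∑ z : Fin n → Bool, (fhat f z)^2
      = ∑ z : Fin n → Bool, (1 / 2 ^ n : ℝ)^2 *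
          ∑ x : Fin n → Bool, ∑ y : Fin n → Bool, (f x * E x z) * (f y * E y z) := by
        refine Finset.sum_congr rfl fun z _ => ?_
        rw [hfhat z, ← Finset.sum_mul_sum]
        ring
    _ = (1 / 2 ^ n : ℝ)^2 * ∑ x : Fin n → Bool, ∑ y : Fin n → Bool,
          f x * f y * ∑ z : Fin n → Bool, E x z * E y z := by
        rw [← Finset.mul_sum]
        congr 1
        rw [Finset.sum_comm]
        refine Finset.sum_congr rfl fun x _ => ?_
        rw [Finset.sum_comm]
        refine Finset.sum_congr rfl fun y _ => ?_
        rw [Finset.mul_sum]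
        refine Finset.sum_congr rfl fun z _ => ?_
        ring
    _ = (1 / 2 ^ n : ℝ)^2 * ∑ x : Fin n → Bool, (f x)^2 * (2:ℝ)^n := by
        congr 1
        refine Finset.sum_congr rfl fun x _ => ?_
        simp_rw [key, mul_ite, mul_zero]
        rw [Finset.sum_ite_eq Finset.univ x (fun y => f x * f y * (2:ℝ)^n)]
        simp [sq]
    _ = (1 / 2 ^ n) * ∑ x : Fin n → Bool, (f x)^2 := by
        rw [← Finset.sum_mul]
        field_simp

lemma term_bound (c : ℝ) (hc : 1 ≤ c) (a : ℝ) :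
    -(a^2 * Real.log (a^2)) ≤ 2 * (a^2 * Real.log c + |a| / c - a^2) := by
  rcases eq_or_ne a 0 with rfl | ha
  · simp
  · have ha' : 0 < |a| := abs_pos.mpr ha
    have hc0 : 0 < c := lt_of_lt_of_le one_pos hc
    have ht : (0:ℝ) < 1 / (|a| * c) := by positivity
    have h1 : Real.log (1 / (|a| * c)) ≤ 1 / (|a| * c) - 1 :=
      Real.log_le_sub_one_of_pos ht
    rw [Real.log_div one_ne_zero (by positivity), Real.log_one,
      Real.log_mul (ne_of_gt ha') (ne_of_gt hc0)] at h1
    have hlog : Real.log (a^2) = 2 * Real.log |a| := by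
      rw [show a^2 = |a|^2 from (sq_abs a).symm, Real.log_pow]
      push_cast
      ring
    rw [hlog]
    have h2 : a^2 * (-(Real.log |a| + Real.log c)) ≤ a^2 * (1 / (|a| * c) - 1) := by
      apply mul_le_mul_of_nonneg_left _ (sq_nonneg a)
      linarith
    have h3 : a^2 * (1 / (|a| * c)) = |a| / c := by
      field_simp
      nlinarith [sq_abs a]
    nlinarith [h2, h3]

end EFB

/-- entropy of squared Fourier coefficients is at most
`2 log₂ (1 + Σ_z |f̂_z|)` whenever `‖f‖₂ ≤ 1`. -/
theorem entropy_fourier_bound {n : ℕ} (f : (Fin n → Bool) → ℝ)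
    (hf : (1 / 2 ^ n) * ∑ x : Fin n → Bool, (f x) ^ 2 ≤ 1) :
    -∑ z : Fin n → Bool, (fhat f z) ^ 2 * Real.logb 2 ((fhat f z) ^ 2) ≤
      2 * Real.logb 2 (1 + ∑ z : Fin n → Bool, |fhat f z|) := by
  set A := ∑ z : Fin n → Bool, |fhat f z| with hA
  set S := ∑ z : Fin n → Bool, (fhat f z)^2 with hS
  have hS1 : S ≤ 1 := by rw [hS, EFB.parseval]; exact hf
  have hS0 : 0 ≤ S := Finset.sum_nonneg fun z _ => sq_nonneg _
  have hA0 : 0 ≤ A := Finset.sum_nonneg fun z _ => abs_nonneg _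
  set c := 1 + A with hc
  have hc1 : (1:ℝ) ≤ c := by linarith
  have hc0 : (0:ℝ) < c := by linarith
  have hlog2 : (0:ℝ) < Real.log 2 := Real.log_pos (by norm_num)
  have hsum : -∑ z : Fin n → Bool, (fhat f z)^2 * Real.log ((fhat f z)^2)
      ≤ 2 * (S * Real.log c + A / c - S) := by
    calc -∑ z : Fin n → Bool, (fhat f z)^2 * Real.log ((fhat f z)^2)
        = ∑ z : Fin n → Bool, -((fhat f z)^2 * Real.log ((fhat f z)^2)) := by
          rw [← Finset.sum_neg_distrib]
      _ ≤ ∑ z : Fin n → Bool, 2 * ((fhat f z)^2 * Real.log c + |fhat f z| / c - (fhat f z)^2) :=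
          Finset.sum_le_sum fun z _ => EFB.term_bound c hc1 (fhat f z)
      _ = 2 * (S * Real.log c + A / c - S) := by
          rw [← Finset.mul_sum]
          congr 1
          rw [Finset.sum_sub_distrib, Finset.sum_add_distrib, ← Finset.sum_mul,
            ← Finset.sum_div, hS, hA]
  have hlogc : A / c ≤ Real.log c := by
    have h := Real.log_le_sub_one_of_pos (show (0:ℝ) < 1/c by positivity)
    rw [Real.log_div one_ne_zero (ne_of_gt hc0), Real.log_one] at h
    have h2 : 1 - 1/c = A / c := by
      field_simp
      rw [hc]
      ring
    linarith
  have hAc : A / c ≤ 1 := by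
    rw [div_le_one hc0]; linarith
  have hfinal : S * Real.log c + A / c - S ≤ Real.log c := by
    nlinarith [mul_nonneg (sub_nonneg.mpr hS1) (sub_nonneg.mpr hlogc),
      mul_nonneg hS0 (sub_nonneg.mpr hAc)]
  have hmain : -∑ z : Fin n → Bool, (fhat f z)^2 * Real.log ((fhat f z)^2)
      ≤ 2 * Real.log c := by linarith
  simp only [Real.logb]
  have hrw : ∑ z : Fin n → Bool, (fhat f z)^2 * (Real.log ((fhat f z)^2) / Real.log 2)
      = (∑ z : Fin n → Bool, (fhat f z)^2 * Real.log ((fhat f z)^2)) / Real.log 2 := by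
    rw [Finset.sum_div]
    exact Finset.sum_congr rfl fun z _ => by ring
  rw [hrw, ← neg_div,
    show 2 * (Real.log c / Real.log 2) = (2 * Real.log c) / Real.log 2 by ring]
  exact (div_le_div_iff_of_pos_right hlog2).mpr hmain
end

section
/- (Lindsey's lemma) Let M be the 2^m × 2^m matrix indexed by x, y ∈ {0,1}^m with entries M(x,y) = (-1)^{⟨x,y⟩} where ⟨x,y⟩ = Σ_i x_i y_i mod 2. Then for any rectangle R = A × B with A, B ⊆ {0,1}^m, |Σ_{x∈A, y∈B} M(x,y)| ≤ √(|A|·|B|·2^m). -/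
/-!
The columns of the sign matrix `(-1) ^ ⟨x, y⟩` are orthogonal, each of squared norm `2 ^ m`.
Hence the row sums `f x = ∑ y ∈ B, (-1) ^ ⟨x, y⟩` satisfy `∑ x, f x ^ 2 = #B * 2 ^ m`, and
Cauchy–Schwarz over `A` bounds `(∑ x ∈ A, f x) ^ 2` by `#A * #B * 2 ^ m`.
-/

open Finset

theorem abs_sum_sum_le_sqrt_of_orthogonal {α β : Type*} [Fintype α] [DecidableEq β]
    (M : α → β → ℝ) (N : ℝ)
    (hM : ∀ y y', ∑ x, M x y * M x y' = if y = y' then N else 0)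
    (A : Finset α) (B : Finset β) :
    |∑ x ∈ A, ∑ y ∈ B, M x y| ≤ Real.sqrt (#A * #B * N) := by
  set f : α → ℝ := fun x => ∑ y ∈ B, M x y
  have hmass : ∑ x, f x ^ 2 = #B * N := by
    calc ∑ x, f x ^ 2 = ∑ y ∈ B, ∑ y' ∈ B, ∑ x, M x y * M x y' := by
          simp only [f, sq, sum_mul_sum]
          rw [sum_comm]
          exact sum_congr rfl fun _ _ => sum_comm
      _ = #B * N := by simp [hM]
  have hsq : (∑ x ∈ A, f x) ^ 2 ≤ #A * #B * N :=
    calc (∑ x ∈ A, f x) ^ 2 ≤ #A * ∑ x ∈ A, f x ^ 2 := sq_sum_le_card_mul_sum_sq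
      _ ≤ #A * ∑ x, f x ^ 2 := by gcongr; exact subset_univ A
      _ = #A * #B * N := by rw [hmass, mul_assoc]
  simpa only [Real.sqrt_sq_eq_abs] using Real.sqrt_le_sqrt hsq

def bitSign (b c : Bool) : ℝ :=
  (-1) ^ (if b && c then 1 else 0 : ℕ)

theorem sum_bitSign_mul_bitSign (c c' : Bool) :
    ∑ b, bitSign b c * bitSign b c' = if c = c' then 2 else 0 := by
  cases c <;> cases c' <;> norm_num [bitSign]

def innerSign {m : ℕ} (x y : Fin m → Bool) : ℝ :=
  (-1) ^ (∑ i : Fin m, if x i && y i then 1 else 0 : ℕ)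

theorem innerSign_eq_prod_bitSign {m : ℕ} (x y : Fin m → Bool) :
    innerSign x y = ∏ i, bitSign (x i) (y i) :=
  (prod_pow_eq_pow_sum _ _ _).symm

theorem sum_innerSign_mul_innerSign {m : ℕ} (y y' : Fin m → Bool) :
    ∑ x, innerSign x y * innerSign x y' = if y = y' then 2 ^ m else 0 := by
  calc ∑ x, innerSign x y * innerSign x y'
      = ∏ i, ∑ b, bitSign b (y i) * bitSign b (y' i) := by
        simp only [innerSign_eq_prod_bitSign, ← prod_mul_distrib]
        exact (Fintype.prod_sum fun i b => bitSign b (y i) * bitSign b (y' i)).symm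
    _ = if y = y' then 2 ^ m else 0 := by
        simp only [sum_bitSign_mul_bitSign, prod_ite_zero, prod_const, card_univ,
          Fintype.card_fin, mem_univ, true_implies, funext_iff]

/-- Lindsey's lemma. -/
theorem lindsey {m : ℕ} (A B : Finset (Fin m → Bool)) :
    |∑ x ∈ A, ∑ y ∈ B, (-1 : ℝ) ^ (∑ i : Fin m, if x i && y i then 1 else 0 : ℕ)| ≤
      Real.sqrt ((A.card : ℝ) * B.card * 2 ^ m) :=
  abs_sum_sum_le_sqrt_of_orthogonal innerSign _ sum_innerSign_mul_innerSign A B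
end

section
/- Let g : {0,1}^n × {0,1}^n → [-1,1] be expressible as g(x,y) = Σ_{i=1}^Q w_i R_i(x,y), where each R_i is the indicator function of a combinatorial rectangle A_i × B_i and each w_i ∈ [-1,1]. Then the sum of absolute values of the diagonal Fourier coefficients satisfies Σ_{z ∈ {0,1}^n} |ĝ_{z,z}| ≤ Q. -/
open Finset

noncomputable def fhat2 {n : ℕ} (F : (Fin n → Bool) → (Fin n → Bool) → ℝ)
    (z z' : Fin n → Bool) : ℝ :=
  (1 / 4 ^ n) * ∑ x : Fin n → Bool, ∑ y : Fin n → Bool,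
    F x y * (-1 : ℝ) ^ ((∑ i : Fin n, if x i && z i then 1 else 0) +
      (∑ i : Fin n, if y i && z' i then 1 else 0) : ℕ)



noncomputable def chi {n : ℕ} (x z : Fin n → Bool) : ℝ :=
  (-1 : ℝ) ^ (∑ i : Fin n, if x i && z i then 1 else 0 : ℕ)

noncomputable def hat {n : ℕ} (S : Finset (Fin n → Bool)) (z : Fin n → Bool) : ℝ :=
  (1 / 2 ^ n) * ∑ x : Fin n → Bool, (if x ∈ S then (1:ℝ) else 0) * chi x z

lemma chi_orth {n : ℕ} (x x' : Fin n → Bool) :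
    ∑ z : Fin n → Bool, chi x z * chi x' z = if x = x' then (2:ℝ)^n else 0 := by
  have h1 : ∀ z : Fin n → Bool, chi x z * chi x' z
      = ∏ i : Fin n, ((-1:ℝ) ^ (if x i && z i then 1 else 0) *
          (-1:ℝ) ^ (if x' i && z i then 1 else 0)) := by
    intro z
    rw [Finset.prod_mul_distrib, Finset.prod_pow_eq_pow_sum, Finset.prod_pow_eq_pow_sum]
    rfl
  calc ∑ z : Fin n → Bool, chi x z * chi x' z
      = ∑ z : Fin n → Bool, ∏ i : Fin n, ((-1:ℝ) ^ (if x i && z i then 1 else 0) *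
          (-1:ℝ) ^ (if x' i && z i then 1 else 0)) := by simp_rw [h1]
    _ = ∏ i : Fin n, ∑ b : Bool, ((-1:ℝ) ^ (if x i && b then 1 else 0) *
          (-1:ℝ) ^ (if x' i && b then 1 else 0)) := (Fintype.prod_sum (κ := fun _ : Fin n => Bool)
          (fun i b => (-1:ℝ) ^ (if x i && b then 1 else 0) *
            (-1:ℝ) ^ (if x' i && b then 1 else 0))).symm
    _ = ∏ i : Fin n, (if x i = x' i then (2:ℝ) else 0) := by
        refine Finset.prod_congr rfl fun i _ => ?_
        cases hx : x i <;> cases hx' : x' i <;> norm_num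
    _ = if x = x' then (2:ℝ)^n else 0 := by
        by_cases h : x = x'
        · simp [h]
        · obtain ⟨i, hi⟩ := Function.ne_iff.mp h
          rw [if_neg h]
          exact Finset.prod_eq_zero (Finset.mem_univ i) (by simp [hi])

lemma parseval {n : ℕ} (S : Finset (Fin n → Bool)) :
    ∑ z : Fin n → Bool, (hat S z) ^ 2 ≤ 1 := by
  have key : ∑ z : Fin n → Bool, (hat S z) ^ 2
      = (1 / 2 ^ n : ℝ) ^ 2 * ((2:ℝ)^n * ∑ x : Fin n → Bool, (if x ∈ S then (1:ℝ) else 0) ^ 2) := by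
    unfold hat
    simp_rw [mul_pow, ← Finset.mul_sum]
    congr 1
    calc ∑ z : Fin n → Bool, (∑ x : Fin n → Bool, (if x ∈ S then (1:ℝ) else 0) * chi x z) ^ 2
        = ∑ z : Fin n → Bool, ∑ x : Fin n → Bool, ∑ x' : Fin n → Bool,
            ((if x ∈ S then (1:ℝ) else 0) * (if x' ∈ S then (1:ℝ) else 0)) *
            (chi x z * chi x' z) := by
          refine Finset.sum_congr rfl fun z _ => ?_
          rw [sq, Finset.sum_mul_sum]
          exact Finset.sum_congr rfl fun x _ => Finset.sum_congr rfl fun x' _ => by ring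
      _ = ∑ x : Fin n → Bool, ∑ x' : Fin n → Bool,
            ((if x ∈ S then (1:ℝ) else 0) * (if x' ∈ S then (1:ℝ) else 0)) *
            (∑ z : Fin n → Bool, chi x z * chi x' z) := by
          rw [Finset.sum_comm]
          refine Finset.sum_congr rfl fun x _ => ?_
          rw [Finset.sum_comm]
          refine Finset.sum_congr rfl fun x' _ => ?_
          rw [← Finset.mul_sum]
      _ = (2:ℝ)^n * ∑ x : Fin n → Bool, (if x ∈ S then (1:ℝ) else 0) ^ 2 := by
          simp_rw [chi_orth]
          rw [Finset.mul_sum]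
          refine Finset.sum_congr rfl fun x _ => ?_
          rw [Finset.sum_eq_single x (fun x' _ hx' => by simp [Ne.symm hx']) (by simp)]
          by_cases h : x ∈ S <;> simp [h]
  rw [key]
  have hcard : ∑ x : Fin n → Bool, (if x ∈ S then (1:ℝ) else 0) ^ 2 ≤ (2:ℝ)^n := by
    calc ∑ x : Fin n → Bool, (if x ∈ S then (1:ℝ) else 0) ^ 2
        ≤ ∑ x : Fin n → Bool, 1 := Finset.sum_le_sum fun x _ => by split <;> norm_num
      _ = (2:ℝ)^n := by simp [Finset.card_univ]
  have h2 : (0:ℝ) < 2^n := by positivity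
  calc (1 / 2 ^ n : ℝ) ^ 2 * ((2:ℝ)^n * ∑ x : Fin n → Bool, (if x ∈ S then (1:ℝ) else 0) ^ 2)
      ≤ (1 / 2 ^ n : ℝ) ^ 2 * ((2:ℝ)^n * (2:ℝ)^n) := by
        have := mul_le_mul_of_nonneg_left hcard (le_of_lt h2)
        exact mul_le_mul_of_nonneg_left this (by positivity)
    _ = 1 := by field_simp

/-- a weighted sum of `Q` rectangles has diagonal Fourier L1 mass at most `Q`. -/
theorem diag_fourier_sum_le_rectangles {n Q : ℕ}
    (g : (Fin n → Bool) → (Fin n → Bool) → ℝ)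
    (w : Fin Q → ℝ) (A B : Fin Q → Finset (Fin n → Bool))
    (hg1 : ∀ x y, g x y ∈ Set.Icc (-1 : ℝ) 1)
    (hw : ∀ i, w i ∈ Set.Icc (-1 : ℝ) 1)
    (hsum : ∀ x y, g x y = ∑ i : Fin Q, w i * (if x ∈ A i ∧ y ∈ B i then 1 else 0)) :
    ∑ z : Fin n → Bool, |fhat2 g z z| ≤ Q := by
  have h4 : (1:ℝ)/4^n = 1/2^n * (1/2^n) := by
    rw [div_mul_div_comm, one_mul, ← mul_pow]; norm_num
  have key : ∀ z : Fin n → Bool,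
      fhat2 g z z = ∑ i : Fin Q, w i * (hat (A i) z * hat (B i) z) := by
    intro z
    have h0 : fhat2 g z z = (1 / 4 ^ n : ℝ) * ∑ x : Fin n → Bool, ∑ y : Fin n → Bool,
        g x y * (chi x z * chi y z) := by
      unfold fhat2 chi; simp_rw [pow_add]
    have h1 : ∀ x y : Fin n → Bool, g x y * (chi x z * chi y z) =
        ∑ i : Fin Q, w i * (((if x ∈ A i then (1:ℝ) else 0) * chi x z) *
          ((if y ∈ B i then (1:ℝ) else 0) * chi y z)) := by
      intro x y
      rw [hsum, Finset.sum_mul]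
      refine Finset.sum_congr rfl fun i _ => ?_
      by_cases hx : x ∈ A i <;> by_cases hy : y ∈ B i <;> simp [hx, hy] <;> ring
    have swap : ∀ (f : (Fin n → Bool) → (Fin n → Bool) → Fin Q → ℝ),
        ∑ x : Fin n → Bool, ∑ y : Fin n → Bool, ∑ i : Fin Q, f x y i
          = ∑ i : Fin Q, ∑ x : Fin n → Bool, ∑ y : Fin n → Bool, f x y i := by
      intro f
      calc ∑ x : Fin n → Bool, ∑ y : Fin n → Bool, ∑ i : Fin Q, f x y i
          = ∑ x : Fin n → Bool, ∑ i : Fin Q, ∑ y : Fin n → Bool, f x y i :=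
            Finset.sum_congr rfl fun x _ => Finset.sum_comm
        _ = ∑ i : Fin Q, ∑ x : Fin n → Bool, ∑ y : Fin n → Bool, f x y i :=
            Finset.sum_comm
    simp_rw [h0, h1]
    rw [swap, Finset.mul_sum]
    refine Finset.sum_congr rfl fun i _ => ?_
    unfold hat
    have hr : ∀ (S1 S2 : ℝ), w i * ((1/2^n*S1)*(1/2^n*S2)) = (1/4^n)*(w i*(S1*S2)) :=
      fun S1 S2 => by rw [h4]; ring
    rw [hr]
    congr 1
    rw [Finset.sum_mul_sum, Finset.mul_sum]
    exact Finset.sum_congr rfl fun x _ => (Finset.mul_sum _ _ _).symm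
  have habs : ∀ (a b : ℝ), |a * b| ≤ (a^2 + b^2)/2 := by
    intro a b
    rw [abs_mul]
    nlinarith [sq_nonneg (|a| - |b|), sq_abs a, sq_abs b, abs_nonneg a, abs_nonneg b]
  calc ∑ z : Fin n → Bool, |fhat2 g z z|
      ≤ ∑ z : Fin n → Bool, ∑ i : Fin Q, |w i * (hat (A i) z * hat (B i) z)| :=
        Finset.sum_le_sum fun z _ => by
          rw [key z]; exact Finset.abs_sum_le_sum_abs _ _
    _ = ∑ i : Fin Q, ∑ z : Fin n → Bool, |w i| * |hat (A i) z * hat (B i) z| := by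
        rw [Finset.sum_comm]; simp_rw [abs_mul]
    _ ≤ ∑ i : Fin Q, ∑ z : Fin n → Bool, ((hat (A i) z)^2 + (hat (B i) z)^2)/2 := by
        refine Finset.sum_le_sum fun i _ => Finset.sum_le_sum fun z _ => ?_
        have hwi : |w i| ≤ 1 := abs_le.mpr ⟨(hw i).1, (hw i).2⟩
        calc |w i| * |hat (A i) z * hat (B i) z|
            ≤ 1 * |hat (A i) z * hat (B i) z| :=
              mul_le_mul_of_nonneg_right hwi (abs_nonneg _)
          _ = |hat (A i) z * hat (B i) z| := one_mul _
          _ ≤ ((hat (A i) z)^2 + (hat (B i) z)^2)/2 := habs _ _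
    _ ≤ ∑ i : Fin Q, 1 := by
        refine Finset.sum_le_sum fun i _ => ?_
        rw [← Finset.sum_div, Finset.sum_add_distrib]
        have := add_le_add (parseval (A i)) (parseval (B i))
        linarith
    _ = Q := by simp
end
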